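/- arXiv:2003.04918 — 5 statements merged into one kernel-verified Lean document; each statement's English description precedes it below -/
import Mathlib

section
/- Fix k ≥ 2 and define R_k = ∏_{p prime, (p−1)|k} p^{η(k,p)}, where η(k,p) = τ(k,p)+2 if p = 2 and τ(k,2) > 0, and η(k,p) = τ(k,p)+1 otherwise, with p^{τ(k,p)} ∥ k. If q is a natural number and a ∈ ℤ/qℤ is a k-th power residue with gcd(a, q) = 1, then a ≡ 1 (mod gcd(R_k, q)). -/
open Finset

/-- `p^(tau k p)` exactly divides `k`. -/
def tau (k p : ℕ) : ℕ := k.factorization p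

def eta (k p : ℕ) : ℕ := if p = 2 ∧ 0 < tau k p then tau k p + 2 else tau k p + 1

/-- `R_k = ∏_{(p-1) ∣ k} p^(eta k p)` (all such primes satisfy `p ≤ k+1`). -/
def Rk (k : ℕ) : ℕ :=
  ∏ p ∈ (Finset.range (k + 2)).filter (fun p => p.Prime ∧ (p - 1) ∣ k), p ^ eta k p

/-- The set of `k`-th power residues mod `q` that are coprime to `q`. -/
def Zset (k q : ℕ) : Set (ZMod q) := {a | (∃ t, t ^ k = a) ∧ IsUnit a}

/-- The `s`-fold sumset of `A ⊆ ℤ/qℤ`. -/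
def sumset (q s : ℕ) (A : Set (ZMod q)) : Set (ZMod q) :=
  {x | ∃ f : Fin s → ZMod q, (∀ i, f i ∈ A) ∧ ∑ i, f i = x}

/-- `(q, s)` is a Waring pair. -/
def WaringPair (k q s : ℕ) : Prop :=
  ∀ A : Set (ZMod q), A ⊆ Zset k q → ((Zset k q).ncard : ℝ) / 2 < (A.ncard : ℝ) →
    sumset q s A =
      {a : ZMod q |
        ZMod.castHom (Nat.gcd_dvd_right (Rk k) q) (ZMod (Nat.gcd (Rk k) q)) a
          = (s : ZMod (Nat.gcd (Rk k) q))}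

lemma two_adic (n : ℕ) (x : ℤ) (hx : Odd x) :
    (2:ℤ)^(n+3) ∣ x^(2^(n+1)) - 1 := by
  induction n with
  | zero =>
    obtain ⟨m, rfl⟩ := hx
    obtain ⟨c, hc⟩ := Int.even_mul_succ_self m
    refine ⟨c, ?_⟩
    norm_num
    linear_combination 4 * hc
  | succ n ih =>
    have h1 : x^(2^(n+2)) - 1 = (x^(2^(n+1)) - 1) * (x^(2^(n+1)) + 1) := by
      rw [pow_succ 2 (n+1), pow_mul]; ring
    have h2 : (2:ℤ) ∣ x^(2^(n+1)) + 1 := (Odd.pow hx).add_one.two_dvd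
    calc (2:ℤ)^(n+4) = 2^(n+3) * 2 := by ring
    _ ∣ (x^(2^(n+1)) - 1) * (x^(2^(n+1)) + 1) := mul_dvd_mul ih h2
    _ = x^(2^(n+2)) - 1 := h1.symm

lemma primepow (k p e x : ℕ) (hk : k ≠ 0) (hp : p.Prime) (hpk : (p-1) ∣ k)
    (he : e ≤ eta k p) (hx : Nat.Coprime x (p^e)) :
    ((p:ℤ)^e) ∣ (x:ℤ)^k - 1 := by
  rcases Nat.eq_zero_or_pos e with rfl | he0
  · simpa using one_dvd _
  have hpe : (0:ℕ) < p^e := pow_pos hp.pos e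
  haveI : NeZero (p^e) := ⟨hpe.ne'⟩
  have hτ : p ^ tau k p ∣ k := Nat.ordProj_dvd k p
  have key : ((x : ZMod (p^e)))^k = 1 := by
    have hux : IsUnit (x : ZMod (p^e)) := (ZMod.isUnit_iff_coprime x (p^e)).mpr hx
    obtain ⟨u, hu⟩ := hux
    have hup : u ^ k = 1 := by
      by_cases h2 : p = 2 ∧ 3 ≤ e
      · obtain ⟨rfl, he3⟩ := h2
        have hτe : e - 2 ≤ tau k 2 := by
          unfold eta at he
          split_ifs at he with h
          · omega
          · exfalso; apply h; constructor
            · rfl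
            · omega
        have hdvd : 2^(e-2) ∣ k := dvd_trans (pow_dvd_pow 2 hτe) hτ
        have hx2 : Nat.Coprime x 2 := hx.coprime_dvd_right (dvd_pow_self 2 he0.ne')
        have hoddx : Odd x := Nat.odd_iff.mpr (by
          rcases Nat.even_or_odd x with hev | hod
          · exfalso
            have : (2:ℕ) ∣ x := hev.two_dvd
            have := (Nat.Prime.coprime_iff_not_dvd Nat.prime_two).mp hx2.symm
            exact this ‹_›
          · exact Nat.odd_iff.mp hod)
        have hodd : Odd (x:ℤ) := by exact_mod_cast hoddx
        have h8 := two_adic (e-3) (x:ℤ) hodd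
        have he' : e - 3 + 3 = e := by omega
        have he'' : e - 3 + 1 = e - 2 := by omega
        rw [he', he''] at h8
        have h0 : (((x:ℤ)^(2^(e-2)) - 1 : ℤ) : ZMod (2^e)) = 0 := by
          rw [ZMod.intCast_zmod_eq_zero_iff_dvd]
          push_cast
          exact h8
        push_cast at h0
        have hz : ((x : ZMod (2^e)))^(2^(e-2)) = 1 := by
          have := sub_eq_zero.mp h0
          exact this
        have hu2 : u ^ (2^(e-2)) = 1 := by
          apply Units.ext
          simpa [hu] using hz
        obtain ⟨c, rfl⟩ := hdvd
        rw [pow_mul, hu2, one_pow]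
      · have hcl : e - 1 ≤ tau k p := by
          unfold eta at he
          split_ifs at he with h
          · obtain ⟨hp2, hτ0⟩ := h
            have : ¬ 3 ≤ e := fun hh => h2 ⟨hp2, hh⟩
            omega
          · omega
        have hφ : Nat.totient (p^e) ∣ k := by
          rw [Nat.totient_prime_pow hp he0]
          have h1 : p^(e-1) ∣ k := dvd_trans (pow_dvd_pow p hcl) hτ
          have hcop : Nat.Coprime p (p-1) := by
            rw [Nat.Prime.coprime_iff_not_dvd hp]
            intro hdvd
            have h2p := hp.two_le
            have := Nat.le_of_dvd (by omega) hdvd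
            omega
          exact Nat.Coprime.mul_dvd_of_dvd_of_dvd (hcop.pow_left _) h1 hpk
        obtain ⟨c, rfl⟩ := hφ
        rw [pow_mul, ZMod.pow_totient u, one_pow]
    rw [← hu, ← Units.val_pow_eq_pow_val, hup, Units.val_one]
  have h0 : (((x:ℤ)^k - 1 : ℤ) : ZMod (p^e)) = 0 := by
    push_cast [key]
    ring
  have := (ZMod.intCast_zmod_eq_zero_iff_dvd _ _).mp h0
  simpa using this

lemma Rk_pos (k : ℕ) : 0 < Rk k := by
  apply Finset.prod_pos
  intro p hp
  simp only [Finset.mem_filter] at hp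
  exact pow_pos hp.2.1.pos _

lemma Rk_prime_mem {k p : ℕ} (hp : p.Prime) (hd : p ∣ Rk k) :
    p ∈ (Finset.range (k + 2)).filter (fun p => p.Prime ∧ (p - 1) ∣ k) := by
  obtain ⟨q, hq, hq2⟩ := hp.prime.exists_mem_finset_dvd hd
  have hqf := hq
  simp only [Finset.mem_filter] at hqf
  have : p = q := (Nat.prime_dvd_prime_iff_eq hp hqf.2.1).mp (hp.dvd_of_dvd_pow hq2)
  rwa [this]

lemma Rk_factorization_le {k p : ℕ} (hp : p.Prime) :
    (Rk k).factorization p ≤ eta k p := by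
  rw [Rk, Nat.factorization_prod (fun q hq => ?_)]
  · rw [Finset.sum_apply']
    have : ∀ q ∈ (Finset.range (k + 2)).filter (fun p => p.Prime ∧ (p - 1) ∣ k),
        (q ^ eta k q).factorization p = if q = p then eta k q else 0 := by
      intro q hq
      simp only [Finset.mem_filter] at hq
      rw [Nat.Prime.factorization_pow hq.2.1, Finsupp.single_apply]
    rw [Finset.sum_congr rfl this, Finset.sum_ite_eq']
    split_ifs <;> simp
  · simp only [Finset.mem_filter] at hq
    exact (pow_pos hq.2.1.pos _).ne'

lemma mod_dvd (k m : ℕ) (hk : k ≠ 0) (hm : m ∣ Rk k) (x : ℕ) (hx : Nat.Coprime x m) :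
    (m:ℤ) ∣ (x:ℤ)^k - 1 := by
  have hm0 : m ≠ 0 := by
    rintro rfl
    exact (Rk_pos k).ne' (zero_dvd_iff.mp hm)
  have hfact : (m:ℤ) = ∏ p ∈ m.primeFactors, (p:ℤ)^(m.factorization p) := by
    conv_lhs => rw [← Nat.factorization_prod_pow_eq_self hm0]
    rw [Finsupp.prod, Nat.support_factorization]
    push_cast
    rfl
  rw [hfact]
  apply Finset.prod_dvd_of_coprime
  · intro p hp q hq hne
    have hp' := Nat.prime_of_mem_primeFactors hp
    have hq' := Nat.prime_of_mem_primeFactors hq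
    have : Nat.Coprime p q := (Nat.coprime_primes hp' hq').mpr hne
    exact (Nat.isCoprime_iff_coprime.mpr this).pow
  · intro p hp
    have hp' := Nat.prime_of_mem_primeFactors hp
    have hpm : p ∣ m := Nat.dvd_of_mem_primeFactors hp
    have hpR : p ∣ Rk k := hpm.trans hm
    have hmem := Rk_prime_mem hp' hpR
    simp only [Finset.mem_filter] at hmem
    have hle : m.factorization p ≤ eta k p := by
      have h1 : m.factorization ≤ (Rk k).factorization :=
        (Nat.factorization_le_iff_dvd hm0 (Rk_pos k).ne').mpr hm
      exact le_trans (Finsupp.le_def.mp h1 p) (Rk_factorization_le hp')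
    exact primepow k p _ x hk hp' hmem.2.2 hle
      (hx.coprime_dvd_right (Nat.ordProj_dvd m p))

theorem stmt2 (k : ℕ) (hk : 2 ≤ k) (q : ℕ) (a : ZMod q)
    (ha : ∃ t : ZMod q, t ^ k = a) (hu : IsUnit a) :
    ZMod.castHom (Nat.gcd_dvd_right (Rk k) q) (ZMod (Nat.gcd (Rk k) q)) a = 1 := by
  obtain ⟨t, rfl⟩ := ha
  have hk0 : k ≠ 0 := by omega
  have hut : IsUnit t := (isUnit_pow_iff hk0).mp hu
  set d := Nat.gcd (Rk k) q with hd
  have hd0 : 0 < d := Nat.gcd_pos_of_pos_left q (Rk_pos k)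
  haveI : NeZero d := ⟨hd0.ne'⟩
  set φ := ZMod.castHom (Nat.gcd_dvd_right (Rk k) q) (ZMod d) with hφ
  obtain ⟨w, hw⟩ := hut.map φ
  have hcop : Nat.Coprime ((w : ZMod d)).val d := ZMod.val_coe_unit_coprime w
  have hdvd := mod_dvd k d hk0 (Nat.gcd_dvd_left _ _) _ hcop
  have h0 : ((((((w : ZMod d)).val :ℤ))^k - 1 : ℤ) : ZMod d) = 0 := by
    rw [ZMod.intCast_zmod_eq_zero_iff_dvd]
    exact hdvd
  push_cast at h0
  have hval : (((w : ZMod d)).val : ZMod d) = (w : ZMod d) :=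
    ZMod.natCast_rightInverse (w : ZMod d)
  rw [hval] at h0
  have : (w : ZMod d)^k = 1 := by linear_combination h0
  rw [map_pow, ← hw, this]
end

section
/- Let k ≥ 2, let e, s be natural numbers, and let q be a square-free natural number with gcd(q, k) = 1. If (q, s) is a Waring pair, then (q^e, s+2) is a Waring pair. -/
open Finset

/-!
By Hensel's lemma (`(q)` is nilpotent in `ℤ/q^e` and `k` is a unit there), `Z(q^e)` is the full
preimage of `Z(q)` under reduction `π : ℤ/q^e → ℤ/q`, whose fibres all have the same size. So a set
`A ⊆ Z(q^e)` of more than half the size projects onto more than half of `Z(q)`, and some fibre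
`π⁻¹{b}` meets `A` in more than half of its points. Given `x` in the right class, write `π x - 2b`
as a sum of `s` elements of `π(A)` and lift them to `A`; what remains of `x` lies in the fibre
`π⁻¹{2b}` and, by pigeonhole, is a sum of two elements of `A ∩ π⁻¹{b}`.
The classes match because every element of `Z(n)` is `1` modulo the squarefree `gcd(R_k, q)`
(Fermat, as `p - 1 ∣ k` for each of its primes `p`), and `gcd(R_k, q^e) = gcd(R_k, q)` because
`q` is coprime to `k`.
-/

theorem isAdicComplete_of_pow_eq_bot {R : Type*} [CommRing R] {I : Ideal R} {n : ℕ}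
    (hI : I ^ n = ⊥) : IsAdicComplete I R where
  haus' x hx := by simpa [hI] using hx n
  prec' f hf := by
    refine ⟨f n, fun m => ?_⟩
    rcases le_total m n with hmn | hnm
    · exact hf hmn
    · have hfnm := hf hnm
      rw [hI, Submodule.bot_smul, SModEq.bot] at hfnm
      rw [hfnm]

open Polynomial in
theorem exists_pow_eq_of_pow_sub_mem {R : Type*} [CommRing R] {I : Ideal R} [HenselianRing R I]
    {k : ℕ} (hk : k ≠ 0) (hkR : IsUnit (k : R)) {a t : R} (ht : IsUnit t) (hta : t ^ k - a ∈ I) :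
    ∃ u, u ^ k = a := by
  have hderiv : (X ^ k - C a).derivative.eval t = k * t ^ (k - 1) := by simp [derivative_X_pow]
  obtain ⟨u, hu, -⟩ := HenselianRing.is_henselian (X ^ k - C a) (monic_X_pow_sub_C a hk) t
    (by simpa using hta) (hderiv ▸ (hkR.mul (ht.pow (k - 1))).map (Ideal.Quotient.mk I))
  exact ⟨u, sub_eq_zero.1 (by simpa using hu)⟩

namespace ZMod

variable {q e : ℕ}

-- via `IsAdicComplete.henselianRing`, this makes `ZMod (q ^ e)` Henselian at `(q)`
instance isAdicComplete_span_natCast_pow :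
    IsAdicComplete (Ideal.span {(q : ZMod (q ^ e))}) (ZMod (q ^ e)) :=
  isAdicComplete_of_pow_eq_bot (n := e) (by
    rw [Ideal.span_singleton_pow, ← Nat.cast_pow, natCast_self, Ideal.span_singleton_eq_bot])

variable [NeZero q]

theorem mem_span_natCast_of_castHom_eq_zero (he : e ≠ 0) {x : ZMod (q ^ e)}
    (hx : castHom (dvd_pow_self q he) (ZMod q) x = 0) : x ∈ Ideal.span {(q : ZMod (q ^ e))} := by
  rw [← natCast_zmod_val x, map_natCast, natCast_eq_zero_iff] at hx
  obtain ⟨c, hc⟩ := hx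
  rw [← natCast_zmod_val x, hc, Nat.cast_mul]
  exact Ideal.mul_mem_right _ _ (Ideal.subset_span rfl)

theorem isUnit_of_isUnit_castHom (he : e ≠ 0) {x : ZMod (q ^ e)}
    (hx : IsUnit (castHom (dvd_pow_self q he) (ZMod q) x)) : IsUnit x := by
  rw [← natCast_zmod_val x, map_natCast, isUnit_iff_coprime] at hx
  rw [← natCast_zmod_val x, isUnit_iff_coprime]
  exact hx.pow_right e

end ZMod

theorem Zset_pow_eq_preimage {k q e : ℕ} [NeZero q] (hk : k ≠ 0) (hqk : q.Coprime k)
    (he : e ≠ 0) :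
    Zset k (q ^ e) = ZMod.castHom (dvd_pow_self q he) (ZMod q) ⁻¹' Zset k q := by
  set π := ZMod.castHom (dvd_pow_self q he) (ZMod q)
  ext a
  constructor
  · rintro ⟨⟨t, rfl⟩, ha⟩
    exact ⟨⟨π t, (map_pow π t k).symm⟩, ha.map π⟩
  · rintro ⟨⟨t, ht⟩, ha⟩
    obtain ⟨t, rfl⟩ := ZMod.castHom_surjective (dvd_pow_self q he) t
    have htunit : IsUnit t :=
      ZMod.isUnit_of_isUnit_castHom he ((isUnit_pow_iff hk).1 (ht ▸ ha))
    have hkunit : IsUnit (k : ZMod (q ^ e)) :=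
      (ZMod.isUnit_iff_coprime k _).2 (hqk.symm.pow_right e)
    obtain ⟨u, rfl⟩ := exists_pow_eq_of_pow_sub_mem (a := a) hk hkunit htunit
      (ZMod.mem_span_natCast_of_castHom_eq_zero he (by rw [map_sub, map_pow, ht, sub_self]))
    exact ⟨⟨u, rfl⟩, ZMod.isUnit_of_isUnit_castHom he ha⟩

theorem Squarefree.dvd_of_forall_prime_dvd {g n : ℕ} (hg : Squarefree g)
    (h : ∀ p, p.Prime → p ∣ g → p ∣ n) : g ∣ n := by
  rw [← Nat.prod_primeFactors_of_squarefree hg]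
  exact Finset.prod_primes_dvd n (fun p hp => (Nat.prime_of_mem_primeFactors hp).prime)
    fun p hp => h p (Nat.prime_of_mem_primeFactors hp) (Nat.dvd_of_mem_primeFactors hp)

theorem ZMod.eq_zero_of_forall_castHom_prime {g : ℕ} (hg : Squarefree g) {x : ZMod g}
    (h : ∀ p, p.Prime → ∀ hpg : p ∣ g, castHom hpg (ZMod p) x = 0) : x = 0 := by
  have : NeZero g := ⟨hg.ne_zero⟩
  rw [← natCast_zmod_val x, natCast_eq_zero_iff]
  refine hg.dvd_of_forall_prime_dvd fun p hp hpg => ?_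
  have hxp := h p hp hpg
  rwa [← natCast_zmod_val x, map_natCast, natCast_eq_zero_iff] at hxp

theorem castHom_eq_one_of_mem_Zset {k n g : ℕ} (hk : k ≠ 0) (hgn : g ∣ n) (hg : Squarefree g)
    (hgk : ∀ p, p.Prime → p ∣ g → p - 1 ∣ k) {a : ZMod n} (ha : a ∈ Zset k n) :
    ZMod.castHom hgn (ZMod g) a = 1 := by
  obtain ⟨⟨t, rfl⟩, hunit⟩ := ha
  rw [← sub_eq_zero]
  refine ZMod.eq_zero_of_forall_castHom_prime hg fun p hp hpg => ?_
  have : Fact p.Prime := ⟨hp⟩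
  set ρ := ZMod.castHom (hpg.trans hgn) (ZMod p)
  have hρt : ρ t ≠ 0 := ((isUnit_pow_iff hk).1 (map_pow ρ t k ▸ hunit.map ρ)).ne_zero
  obtain ⟨c, hc⟩ := hgk p hp hpg
  rw [map_sub, map_one, ← RingHom.comp_apply, ZMod.castHom_comp, map_pow, hc, pow_mul,
    ZMod.pow_card_sub_one_eq_one hρt, one_pow, sub_self]

theorem Rk_ne_zero (k : ℕ) : Rk k ≠ 0 :=
  Finset.prod_ne_zero_iff.2 fun _ hp => pow_ne_zero _ (Finset.mem_filter.1 hp).2.1.ne_zero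

theorem sub_one_dvd_of_prime_dvd_Rk {k p : ℕ} (hp : p.Prime) (h : p ∣ Rk k) : p - 1 ∣ k := by
  obtain ⟨p', hp', hpp'⟩ := hp.prime.exists_mem_finset_dvd h
  obtain ⟨-, hp'prime, hp'k⟩ := Finset.mem_filter.1 hp'
  rwa [(Nat.prime_dvd_prime_iff_eq hp hp'prime).1 (hp.dvd_of_dvd_pow hpp')]

theorem factorization_Rk_le_one {k p : ℕ} (hpk : ¬ p ∣ k) : (Rk k).factorization p ≤ 1 := by
  have hterm : ∀ p' ∈ (Finset.range (k + 2)).filter (fun p => p.Prime ∧ (p - 1) ∣ k),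
      (p' ^ eta k p').factorization p = if p' = p then eta k p' else 0 := by
    intro p' hp'
    rw [Nat.factorization_pow, (Finset.mem_filter.1 hp').2.1.factorization]
    simp [Finsupp.single_apply]
  rw [Rk, Nat.factorization_prod fun p' hp' => pow_ne_zero _ (Finset.mem_filter.1 hp').2.1.ne_zero,
    Finsupp.finsetSum_apply, Finset.sum_congr rfl hterm, Finset.sum_ite_eq']
  split_ifs
  · simp [eta, tau, Nat.factorization_eq_zero_of_not_dvd hpk]
  · exact zero_le_one

theorem gcd_Rk_pow {k q e : ℕ} (hq : q ≠ 0) (hqk : q.Coprime k) (he : e ≠ 0) :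
    Nat.gcd (Rk k) (q ^ e) = Nat.gcd (Rk k) q := by
  refine Nat.eq_of_factorization_eq (Nat.gcd_ne_zero_left (Rk_ne_zero k))
    (Nat.gcd_ne_zero_left (Rk_ne_zero k)) fun p => ?_
  rw [Nat.factorization_gcd (Rk_ne_zero k) (pow_ne_zero e hq),
    Nat.factorization_gcd (Rk_ne_zero k) hq, Nat.factorization_pow]
  simp only [Finsupp.inf_apply, Finsupp.smul_apply, smul_eq_mul]
  rcases eq_or_ne (q.factorization p) 0 with hpq | hpq
  · simp [hpq]
  have hp : p.Prime :=
    Nat.prime_of_mem_primeFactors (by rwa [← Nat.support_factorization, Finsupp.mem_support_iff])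
  have hpk : ¬ p ∣ k := fun hpk =>
    hp.one_lt.ne' (Nat.eq_one_of_dvd_coprimes hqk (Nat.dvd_of_factorization_pos hpq) hpk)
  have := factorization_Rk_le_one hpk
  have := Nat.le_mul_of_pos_left (q.factorization p) (Nat.pos_of_ne_zero he)
  omega

theorem castHom_gcd_Rk_eq_one_of_mem_Zset {k q n : ℕ} (hk : k ≠ 0) (hq : Squarefree q)
    (hn : Nat.gcd (Rk k) q ∣ n) {a : ZMod n} (ha : a ∈ Zset k n) :
    ZMod.castHom hn (ZMod (Nat.gcd (Rk k) q)) a = 1 :=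
  castHom_eq_one_of_mem_Zset hk hn (hq.squarefree_of_dvd (Nat.gcd_dvd_right _ _))
    (fun _ hp hpg => sub_one_dvd_of_prime_dvd_Rk hp (hpg.trans (Nat.gcd_dvd_left _ _))) ha

namespace AddMonoidHom

variable {G H : Type*} [AddGroup G] [AddGroup H] (φ : G →+ H)

theorem ncard_preimage_singleton_map (g : G) : (φ ⁻¹' {φ g}).ncard = Nat.card φ.ker := by
  have hcoset : φ ⁻¹' {φ g} = (g + ·) '' (φ.ker : Set G) := by
    ext x
    refine ⟨fun hx => ⟨-g + x, ?_, add_neg_cancel_left g x⟩, ?_⟩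
    · simp_all [mem_ker]
    · rintro ⟨y, hy, rfl⟩
      simp_all [mem_ker]
  rw [hcoset, Set.ncard_image_of_injective _ (add_right_injective g), ← Nat.card_coe_set_eq,
    SetLike.coe_sort_coe]

theorem ncard_preimage_singleton_le (b : H) : (φ ⁻¹' {b}).ncard ≤ Nat.card φ.ker := by
  by_cases hb : b ∈ Set.range φ
  · obtain ⟨g, rfl⟩ := hb
    exact (ncard_preimage_singleton_map φ g).le
  · rw [Set.preimage_singleton_eq_empty.2 hb, Set.ncard_empty]
    exact Nat.zero_le _

variable [Finite G]

theorem ncard_preimage (hφ : Function.Surjective φ) (Z : Set H) :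
    (φ ⁻¹' Z).ncard = Z.ncard * Nat.card φ.ker := by
  classical
  have := Fintype.ofFinite G
  have : Finite H := Finite.of_surjective φ hφ
  have := Fintype.ofFinite H
  rw [Set.ncard_eq_toFinset_card', Set.ncard_eq_toFinset_card',
    Finset.card_eq_sum_card_fiberwise (f := φ) (t := Z.toFinset) (fun x hx => by simpa using hx),
    ← smul_eq_mul, ← Finset.sum_const]
  refine Finset.sum_congr rfl fun b hb => ?_
  obtain ⟨g, rfl⟩ := hφ b
  rw [← ncard_preimage_singleton_map φ g, ← Set.ncard_coe_finset]
  congr 1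
  ext x
  simp_all

theorem ncard_le_ncard_image_mul (A : Set G) : A.ncard ≤ (φ '' A).ncard * Nat.card φ.ker := by
  classical
  have := Fintype.ofFinite G
  rw [Set.ncard_eq_toFinset_card', Set.ncard_eq_toFinset_card', Set.toFinset_image, mul_comm]
  refine Finset.card_le_mul_card_image _ _ fun b _ => ?_
  rw [← Set.ncard_coe_finset]
  refine (Set.ncard_le_ncard ?_).trans (ncard_preimage_singleton_le φ b)
  intro x
  simp

theorem lt_two_mul_ncard_image {Z : Set H} {A : Set G}
    (hcard : Z.ncard * Nat.card φ.ker < 2 * A.ncard) : Z.ncard < 2 * (φ '' A).ncard :=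
  Nat.lt_of_mul_lt_mul_right <| hcard.trans_le <| by
    rw [mul_assoc]; exact Nat.mul_le_mul_left 2 (φ.ncard_le_ncard_image_mul A)

theorem exists_lt_two_mul_ncard_inter_preimage_singleton [Finite H] {Z : Set H} {A : Set G}
    (hA : A ⊆ φ ⁻¹' Z) (hcard : Z.ncard * Nat.card φ.ker < 2 * A.ncard) :
    ∃ b ∈ Z, Nat.card φ.ker < 2 * (A ∩ φ ⁻¹' {b}).ncard := by
  classical
  have := Fintype.ofFinite G
  have := Fintype.ofFinite H
  obtain ⟨b, hb, hlt⟩ := Finset.exists_lt_card_fiber_of_nsmul_lt_card_of_maps_to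
    (s := A.toFinset) (t := Z.toFinset) (f := φ) (b := (Nat.card φ.ker : ℚ) / 2)
    (fun x hx => by simpa using hA (Set.mem_toFinset.1 hx))
    (by
      rw [nsmul_eq_mul, ← Set.ncard_eq_toFinset_card', ← Set.ncard_eq_toFinset_card',
        mul_div_assoc', div_lt_iff₀ two_pos, mul_comm (A.ncard : ℚ)]
      exact_mod_cast hcard)
  have hfiber : {x ∈ A.toFinset | φ x = b} = (A ∩ φ ⁻¹' {b}).toFinset := by ext; simp
  rw [hfiber, ← Set.ncard_eq_toFinset_card', div_lt_iff₀ two_pos, mul_comm] at hlt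
  exact ⟨b, Set.mem_toFinset.1 hb, by exact_mod_cast hlt⟩

theorem exists_add_eq_of_lt_two_mul_ncard {b : H} {F : Set G} (hF : F ⊆ φ ⁻¹' {b})
    (hcard : Nat.card φ.ker < 2 * F.ncard) {z : G} (hz : φ z = b + b) :
    ∃ u ∈ F, ∃ w ∈ F, u + w = z := by
  set F' := (z - ·) '' F
  have hF' : F' ⊆ φ ⁻¹' {b} := by
    rintro _ ⟨w, hw, rfl⟩
    have hwb : φ w = b := hF hw
    simp [hz, hwb]
  have hF'card : F'.ncard = F.ncard := Set.ncard_image_of_injective _ sub_right_injective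
  obtain ⟨u, huF, w, hwF, hwu⟩ : (F ∩ F').Nonempty := by
    by_contra hdisj
    rw [Set.not_nonempty_iff_eq_empty, ← Set.disjoint_iff_inter_eq_empty] at hdisj
    have := Set.ncard_le_ncard (Set.union_subset hF hF')
    rw [Set.ncard_union_eq hdisj, hF'card] at this
    have := ncard_preimage_singleton_le φ b
    omega
  exact ⟨u, huF, w, hwF, by rw [← hwu]; exact sub_add_cancel z w⟩

end AddMonoidHom

theorem natCast_div_two_lt_iff {x y : ℕ} : (x : ℝ) / 2 < y ↔ x < 2 * y := by
  rw [div_lt_iff₀ two_pos, mul_comm]; exact_mod_cast Iff.rfl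

section Sumset

variable {q : ℕ} {A : Set (ZMod q)}

theorem add_mem_sumset {s t : ℕ} {x y : ZMod q} (hx : x ∈ sumset q s A) (hy : y ∈ sumset q t A) :
    x + y ∈ sumset q (s + t) A := by
  obtain ⟨f, hf, rfl⟩ := hx
  obtain ⟨g, hg, rfl⟩ := hy
  refine ⟨Fin.append f g, fun i => ?_, by simp [Fin.sum_univ_add]⟩
  exact Fin.addCases (fun i => by simpa using hf i) (fun i => by simpa using hg i) i

theorem add_mem_sumset_two {u w : ZMod q} (hu : u ∈ A) (hw : w ∈ A) : u + w ∈ sumset q 2 A :=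
  ⟨![u, w], fun i => by fin_cases i <;> assumption, by simp⟩

theorem map_eq_nsmul_of_mem_sumset {M : Type*} [AddCommMonoid M] (φ : ZMod q →+ M) {c : M}
    (hA : ∀ a ∈ A, φ a = c) {s : ℕ} {x : ZMod q} (hx : x ∈ sumset q s A) : φ x = s • c := by
  obtain ⟨f, hf, rfl⟩ := hx
  simp [map_sum, hA _ (hf _)]

theorem mem_sumset_add_two {n m s : ℕ} [NeZero n] (φ : ZMod n →+ ZMod m) {A : Set (ZMod n)}
    {b : ZMod m} (hb : Nat.card φ.ker < 2 * (A ∩ φ ⁻¹' {b}).ncard) {x : ZMod n}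
    (hx : φ x - (b + b) ∈ sumset m s (φ '' A)) : x ∈ sumset n (s + 2) A := by
  obtain ⟨f, hf, hfx⟩ := hx
  choose a haA hφa using hf
  have hz : φ (x - ∑ i, a i) = b + b := by
    rw [map_sub, map_sum]
    simp only [hφa, hfx, sub_sub_cancel]
  obtain ⟨u, hu, w, hw, huw⟩ := φ.exists_add_eq_of_lt_two_mul_ncard Set.inter_subset_right hb hz
  have := add_mem_sumset ⟨a, haA, rfl⟩ (add_mem_sumset_two hu.1 hw.1)
  rwa [huw, add_sub_cancel] at this

end Sumset

theorem waringPair_one (k s : ℕ) : WaringPair k 1 s := by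
  intro A _ hcard
  obtain ⟨a, ha⟩ : A.Nonempty := Set.nonempty_of_ncard_ne_zero fun hA => by
    rw [hA, Nat.cast_zero] at hcard
    linarith [show (0 : ℝ) ≤ (Zset k 1).ncard / 2 by positivity]
  have : Subsingleton (ZMod (Nat.gcd (Rk k) 1)) := by rw [Nat.gcd_one_right]; infer_instance
  ext x
  exact ⟨fun _ => Subsingleton.elim _ _, fun _ => ⟨fun _ => a, fun _ => ha, Subsingleton.elim _ _⟩⟩

theorem stmt7 (k : ℕ) (hk : 2 ≤ k) (e s q : ℕ) (hq : Squarefree q)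
    (hqk : Nat.Coprime q k) (h : WaringPair k q s) :
    WaringPair k (q ^ e) (s + 2) := by
  rcases eq_or_ne e 0 with rfl | he
  · rw [pow_zero]; exact waringPair_one k (s + 2)
  have hk0 : k ≠ 0 := by omega
  have : NeZero q := ⟨hq.ne_zero⟩
  set π := ZMod.castHom (dvd_pow_self q he) (ZMod q)
  set φ : ZMod (q ^ e) →+ ZMod q := π.toAddMonoidHom
  set g := Nat.gcd (Rk k) q
  intro A hA hcard
  have hZ := Zset_pow_eq_preimage hk0 hqk he
  have hAZ : A ⊆ φ ⁻¹' Zset k q := hZ ▸ hA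
  have hdense : (Zset k q).ncard * Nat.card φ.ker < 2 * A.ncard := by
    rw [← φ.ncard_preimage (ZMod.castHom_surjective (dvd_pow_self q he)),
      ← natCast_div_two_lt_iff]
    exact hZ ▸ hcard
  have hB := h _ (Set.image_subset_iff.2 hAZ)
    (natCast_div_two_lt_iff.2 (φ.lt_two_mul_ncard_image hdense))
  obtain ⟨b, hbZ, hb⟩ := φ.exists_lt_two_mul_ncard_inter_preimage_singleton hAZ hdense
  -- the modulus `gcd (Rk k) (q ^ e)` occurs in the type of the cast, so it is generalized first
  suffices ∀ d (hd : d ∣ q ^ e), d = g →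
      sumset (q ^ e) (s + 2) A = {a | ZMod.castHom hd (ZMod d) a = ((s + 2 : ℕ) : ZMod d)} from
    this _ _ (gcd_Rk_pow hq.ne_zero hqk he)
  rintro _ hd rfl
  ext x
  refine ⟨fun hx => ?_, fun hx => mem_sumset_add_two φ hb ?_⟩
  · simpa using map_eq_nsmul_of_mem_sumset (ZMod.castHom hd (ZMod g)).toAddMonoidHom
      (fun a ha => castHom_gcd_Rk_eq_one_of_mem_Zset hk0 hq hd (hA ha)) hx
  · rw [hB]
    show ZMod.castHom _ (ZMod g) (π x - (b + b)) = s
    rw [map_sub, ← RingHom.comp_apply, ZMod.castHom_comp, hx, map_add,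
      castHom_gcd_Rk_eq_one_of_mem_Zset hk0 hq _ hbZ]
    push_cast
    ring
end

section
/- Let q be square-free and let A₁,…,A_s ⊆ (ℤ/qℤ)^× (s ∈ ℕ). Then there exist downsets A₁',…,A_s' ⊆ ℤ/qℤ such that |Aᵢ'| = |Aᵢ| for all i, u(Aᵢ) is an upper bound for Aᵢ' for all i, and |A₁'+⋯+A_s'| ≤ |A₁+⋯+A_s|. -/
open Finset

/-- `D(v)`: the elements below `v` in every prime coordinate of squarefree `q`. -/
def Dset (q : ℕ) (v : ZMod q) : Set (ZMod q) :=
  {b | ∀ p ∈ q.primeFactors, b.val % p ≤ v.val % p}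

/-- `A` is a downset in `ℤ/qℤ` (for `q` squarefree, coordinatewise order). -/
def IsDownset (q : ℕ) (A : Finset (ZMod q)) : Prop :=
  ∀ v ∈ A, ∀ b : ZMod q, b ∈ Dset q v → b ∈ A

/-- The `s`-fold sumset of a family of finsets in `ℤ/qℤ`. -/
def finSumset (q s : ℕ) (A : Fin s → Finset (ZMod q)) : Finset (ZMod q) :=
  (Fintype.piFinset A).image (fun f => ∑ i, f i)

/-!
Via the Chinese remainder theorem, `ℤ/qℤ` is the grid `∏_{p ∣ q} ℤ/pℤ`. Compressing a set in the
direction of the `p`-axis replaces, on every line parallel to that axis, the points of the set by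
the initial segment `{0, …, c - 1}` of the same size `c`. This keeps the size of the set, keeps it
compressed in the other directions and does not increase the number of residues mod `p` it
occupies. Nor does it enlarge an `s`-fold sumset: on a line, the compressed sumset lies below its
largest element `x`, a sum of elements of initial segments of sizes `c_k`, so `x ≤ ∑ (c_k - 1)`;
by Cauchy–Davenport the original sumset meets the same line in at least
`min(p, ∑ (c_k - 1) + 1) ≥ x + 1` points. Compressing in every direction produces downsets.
Units avoid residue `0` mod `p`, so `r(A, p) < p` and `u(A) mod p` is `r(A, p)` itself.
-/

open scoped Pointwise

namespace Finset

variable {M : Type*} [AddCommMonoid M] [DecidableEq M]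

theorem mem_fintype_sum {κ : Type*} [Fintype κ] (B : κ → Finset M) (x : M) :
    x ∈ ∑ i, B i ↔ ∃ f : κ → M, (∀ i, f i ∈ B i) ∧ ∑ i, f i = x := by
  rw [← mem_coe, coe_sum, Set.mem_fintype_sum]
  simp

theorem image_sum {N F κ : Type*} [AddCommMonoid N] [DecidableEq N] [FunLike F M N]
    [AddMonoidHomClass F M N] (φ : F) (t : Finset κ) (B : κ → Finset M) :
    (∑ i ∈ t, B i).image φ = ∑ i ∈ t, (B i).image φ :=
  map_sum (imageAddMonoidHom φ) B t

end Finset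

theorem Function.update_sum {ι κ : Type*} [DecidableEq ι] [Fintype κ] {β : ι → Type*}
    [∀ i, AddCommMonoid (β i)] (f : κ → ∀ i, β i) (j : ι) (t : κ → β j) :
    ∑ k, Function.update (f k) j (t k) = Function.update (∑ k, f k) j (∑ k, t k) := by
  funext m
  by_cases hm : m = j
  · subst hm
    simp [Finset.sum_apply]
  · simp [Finset.sum_apply, Function.update_of_ne hm]

theorem ZMod.card_filter_val_lt {m : ℕ} [NeZero m] (c : ℕ) :
    #{t : ZMod m | t.val < c} = min c m := by
  have himage : ({t : ZMod m | t.val < c} : Finset _).image ZMod.val = range (min c m) := by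
    ext k
    simp only [mem_image, mem_filter, mem_univ, true_and, mem_range, lt_min_iff]
    constructor
    · rintro ⟨t, ht, rfl⟩
      exact ⟨ht, t.val_lt⟩
    · rintro ⟨hc, hm⟩
      exact ⟨k, by rwa [ZMod.val_cast_of_lt hm], ZMod.val_cast_of_lt hm⟩
  rw [← card_range (min c m), ← himage, card_image_of_injective _ (ZMod.val_injective m)]

theorem ZMod.val_castHom {a b : ℕ} [NeZero a] (h : b ∣ a) (x : ZMod a) :
    (ZMod.castHom h (ZMod b) x).val = x.val % b := by
  rw [ZMod.castHom_apply, ZMod.cast_eq_val, ZMod.val_natCast]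

theorem ZMod.val_sum_le {m : ℕ} {κ : Type*} (t : Finset κ) (v : κ → ZMod m) :
    (∑ i ∈ t, v i).val ≤ ∑ i ∈ t, (v i).val := by
  classical
  induction t using Finset.induction_on with
  | empty => simp
  | insert i t hi ih =>
    rw [sum_insert hi, sum_insert hi]
    exact (ZMod.val_add_le _ _).trans (by omega)

theorem ZMod.cauchy_davenport_sum {p : ℕ} (hp : p.Prime) {κ : Type*} (t : Finset κ)
    {B : κ → Finset (ZMod p)} (hB : ∀ i ∈ t, (B i).Nonempty) :
    min p (∑ i ∈ t, (#(B i) - 1) + 1) ≤ #(∑ i ∈ t, B i) := by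
  classical
  induction t using Finset.induction_on with
  | empty => simp
  | insert i t hi ih =>
    have ih := ih fun k hk => hB k (mem_insert_of_mem hk)
    have hBi := hB i (mem_insert_self i t)
    have hsum : (∑ k ∈ t, B k).Nonempty := card_pos.mp (by have := hp.pos; omega)
    have hcd := ZMod.cauchy_davenport hp hBi hsum
    have := hBi.card_pos
    rw [sum_insert hi, sum_insert hi]
    omega

namespace PiZMod

variable {ι : Type*} [Fintype ι] [DecidableEq ι] {n : ι → ℕ} [∀ i, NeZero (n i)]

def lineFiber (j : ι) (A : Finset (∀ i, ZMod (n i))) (a : ∀ i, ZMod (n i)) :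
    Finset (ZMod (n j)) :=
  {t | Function.update a j t ∈ A}

def compress (j : ι) (A : Finset (∀ i, ZMod (n i))) : Finset (∀ i, ZMod (n i)) :=
  {a | (a j).val < #(lineFiber j A a)}

def IsCompressedAt (j : ι) (A : Finset (∀ i, ZMod (n i))) : Prop :=
  ∀ a ∈ A, ∀ t : ZMod (n j), t.val ≤ (a j).val → Function.update a j t ∈ A

variable {j : ι} {A : Finset (∀ i, ZMod (n i))} {a : ∀ i, ZMod (n i)}

@[simp]
theorem mem_lineFiber {t : ZMod (n j)} : t ∈ lineFiber j A a ↔ Function.update a j t ∈ A := by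
  simp [lineFiber]

theorem mem_compress : a ∈ compress j A ↔ (a j).val < #(lineFiber j A a) := by
  simp [compress]

@[simp]
theorem lineFiber_update (t : ZMod (n j)) :
    lineFiber j A (Function.update a j t) = lineFiber j A a := by
  ext
  simp

theorem lineFiber_subset_image : lineFiber j A a ⊆ A.image (· j) :=
  fun _ ht => mem_image.mpr ⟨_, mem_lineFiber.mp ht, Function.update_self _ _ _⟩

theorem lineFiber_compress :
    lineFiber j (compress j A) a = ({t | t.val < #(lineFiber j A a)} : Finset (ZMod (n j))) := by
  ext t
  simp [mem_compress]

theorem card_lineFiber_compress : #(lineFiber j (compress j A) a) = #(lineFiber j A a) := by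
  rw [lineFiber_compress, ZMod.card_filter_val_lt, min_eq_left]
  simpa using card_le_univ (lineFiber j A a)

theorem image_update_lineFiber (r : ∀ i, ZMod (n i)) (hr : r j = 0) :
    (lineFiber j A r).image (Function.update r j) = {a ∈ A | Function.update a j 0 = r} := by
  ext a
  simp only [mem_image, mem_lineFiber, mem_filter]
  constructor
  · rintro ⟨t, ht, rfl⟩
    simp [ht, ← hr]
  · rintro ⟨ha, rfl⟩
    exact ⟨a j, by simpa using ha, by simp⟩

variable (j A) in
theorem card_eq_sum_card_lineFiber :
    #A = ∑ r with r j = 0, #(lineFiber j A r) := by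
  rw [card_eq_sum_card_fiberwise (f := fun a => Function.update a j 0) (t := {r | r j = 0})
    (fun a _ => by simp)]
  refine sum_congr rfl fun r hr => ?_
  rw [← image_update_lineFiber r (mem_filter.mp hr).2,
    card_image_of_injective _ (Function.update_injective r j)]

theorem card_compress : #(compress j A) = #A := by
  rw [card_eq_sum_card_lineFiber j A, card_eq_sum_card_lineFiber j (compress j A)]
  exact sum_congr rfl fun r _ => card_lineFiber_compress

theorem isCompressedAt_compress : IsCompressedAt j (compress j A) := by
  intro a ha t ht
  rw [mem_compress] at ha ⊢
  rw [Function.update_self, lineFiber_update]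
  exact ht.trans_lt ha

theorem IsCompressedAt.lineFiber_subset_lineFiber_update {k : ι} (hA : IsCompressedAt k A)
    (hkj : k ≠ j) {t : ZMod (n k)} (ht : t.val ≤ (a k).val) :
    lineFiber j A a ⊆ lineFiber j A (Function.update a k t) := by
  intro x hx
  rw [mem_lineFiber] at hx ⊢
  rw [Function.update_comm hkj]
  exact hA _ hx t (by rwa [Function.update_of_ne hkj])

theorem IsCompressedAt.compress {k : ι} (hA : IsCompressedAt k A) (j : ι) :
    IsCompressedAt k (compress j A) := by
  obtain rfl | hkj := eq_or_ne k j
  · exact isCompressedAt_compress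
  intro a ha t ht
  rw [mem_compress] at ha ⊢
  rw [Function.update_of_ne hkj.symm]
  exact ha.trans_le (card_le_card (hA.lineFiber_subset_lineFiber_update hkj ht))

omit [∀ i, NeZero (n i)] in
theorem mem_of_forall_isCompressedAt (hA : ∀ j, IsCompressedAt j A) {v b : ∀ i, ZMod (n i)}
    (hv : v ∈ A) (hb : ∀ j, (b j).val ≤ (v j).val) : b ∈ A := by
  have key : ∀ S : Finset ι, S.piecewise b v ∈ A := by
    intro S
    induction S using Finset.induction_on with
    | empty => simpa
    | insert j S hj ih =>
      rw [piecewise_insert]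
      exact hA j _ ih (b j) (by rw [piecewise_eq_of_notMem _ _ _ hj]; exact hb j)
  simpa using key univ

omit [Fintype ι] in
theorem IsCompressedAt.val_lt_card_image (hA : IsCompressedAt j A) (ha : a ∈ A) :
    (a j).val < #(A.image (· j)) := by
  have hsub : ({t | t.val < (a j).val + 1} : Finset (ZMod (n j))) ⊆ A.image (· j) :=
    fun t ht => mem_image.mpr ⟨_, hA a ha t (by simpa [Nat.lt_succ_iff] using ht),
      Function.update_self _ _ _⟩
  have hcard := card_le_card hsub
  rwa [ZMod.card_filter_val_lt, min_eq_left (a j).val_lt] at hcard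

theorem card_image_compress_le (j k : ι) (A : Finset (∀ i, ZMod (n i))) :
    #((compress k A).image (· j)) ≤ #(A.image (· j)) := by
  obtain rfl | hkj := eq_or_ne k j
  · have hsub : (compress k A).image (· k) ⊆
        ({t | t.val < #(A.image (· k))} : Finset (ZMod (n k))) := by
      intro t ht
      obtain ⟨a, ha, rfl⟩ := mem_image.mp ht
      simpa using (mem_compress.mp ha).trans_le (card_le_card lineFiber_subset_image)
    exact (card_le_card hsub).trans (by rw [ZMod.card_filter_val_lt]; exact min_le_left _ _)
  · refine card_le_card fun t ht => ?_
    obtain ⟨a, ha, rfl⟩ := mem_image.mp ht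
    obtain ⟨x, hx⟩ := card_pos.mp ((Nat.zero_le _).trans_lt (mem_compress.mp ha))
    exact mem_image.mpr ⟨_, mem_lineFiber.mp hx, Function.update_of_ne hkj.symm _ _⟩

section Sumset

variable {κ : Type*} [Fintype κ]

theorem sum_lineFiber_subset (A : κ → Finset (∀ i, ZMod (n i)))
    (f : κ → ∀ i, ZMod (n i)) :
    ∑ k, lineFiber j (A k) (f k) ⊆ lineFiber j (∑ k, A k) (∑ k, f k) := by
  intro x hx
  obtain ⟨t, ht, rfl⟩ := (mem_fintype_sum _ _).mp hx
  rw [mem_lineFiber, ← Function.update_sum]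
  exact (mem_fintype_sum _ _).mpr ⟨_, fun k => mem_lineFiber.mp (ht k), rfl⟩

theorem card_lineFiber_sum_compress_le (hp : (n j).Prime) (A : κ → Finset (∀ i, ZMod (n i)))
    (r : ∀ i, ZMod (n i)) :
    #(lineFiber j (∑ k, compress j (A k)) r) ≤ #(lineFiber j (∑ k, A k) r) := by
  obtain hempty | hne := (lineFiber j (∑ k, compress j (A k)) r).eq_empty_or_nonempty
  · simp [hempty]
  obtain ⟨x, hx, hmax⟩ := exists_max_image _ ZMod.val hne
  obtain ⟨f, hf, hfx⟩ := (mem_fintype_sum _ _).mp (mem_lineFiber.mp hx)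
  have hfib : ∀ k, (f k j).val < #(lineFiber j (A k) (f k)) := fun k => mem_compress.mp (hf k)
  have hx_eq : x = ∑ k, f k j := by simpa [Finset.sum_apply] using congrFun hfx.symm j
  calc #(lineFiber j (∑ k, compress j (A k)) r)
      ≤ #({t | t.val < x.val + 1} : Finset (ZMod (n j))) :=
        card_le_card fun t ht => by simpa [Nat.lt_succ_iff] using hmax t ht
    _ ≤ x.val + 1 := by rw [ZMod.card_filter_val_lt]; exact min_le_left _ _
    _ ≤ min (n j) (∑ k, (#(lineFiber j (A k) (f k)) - 1) + 1) := by
        refine le_min x.val_lt (Nat.succ_le_succ ?_)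
        calc x.val ≤ ∑ k, (f k j).val := hx_eq ▸ ZMod.val_sum_le _ _
          _ ≤ _ := sum_le_sum fun k _ => Nat.le_pred_of_lt (hfib k)
    _ ≤ #(∑ k, lineFiber j (A k) (f k)) :=
        ZMod.cauchy_davenport_sum hp _ fun k _ =>
          card_pos.mp ((Nat.zero_le _).trans_lt (hfib k))
    _ ≤ #(lineFiber j (∑ k, A k) r) := by
        simpa [hfx] using card_le_card (sum_lineFiber_subset (j := j) A f)

theorem card_sum_compress_le (hp : (n j).Prime) (A : κ → Finset (∀ i, ZMod (n i))) :
    #(∑ k, compress j (A k)) ≤ #(∑ k, A k) := by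
  rw [card_eq_sum_card_lineFiber j, card_eq_sum_card_lineFiber j]
  exact sum_le_sum fun r _ => card_lineFiber_sum_compress_le hp A r

theorem exists_compressed_family (hn : ∀ i, (n i).Prime) (S : Finset ι)
    (A : κ → Finset (∀ i, ZMod (n i))) :
    ∃ B : κ → Finset (∀ i, ZMod (n i)),
      (∀ k, #(B k) = #(A k)) ∧ (∀ k, ∀ j ∈ S, IsCompressedAt j (B k)) ∧
      (∀ k j, #((B k).image (· j)) ≤ #((A k).image (· j))) ∧
      #(∑ k, B k) ≤ #(∑ k, A k) := by
  induction S using Finset.induction_on with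
  | empty => exact ⟨A, fun _ => rfl, by simp, fun _ _ => le_rfl, le_rfl⟩
  | insert j S _ ih =>
    obtain ⟨B, hcard, hcomp, himage, hsum⟩ := ih
    refine ⟨fun k => compress j (B k), fun k => card_compress.trans (hcard k), ?_,
      fun k i => (card_image_compress_le i j (B k)).trans (himage k i),
      (card_sum_compress_le (hn j) B).trans hsum⟩
    intro k i hi
    obtain rfl | hi := mem_insert.mp hi
    · exact isCompressedAt_compress
    · exact (hcomp k i hi).compress j

end Sumset

end PiZMod

theorem ZMod.exists_ringEquiv_pi_primeFactors {q : ℕ} (hq : Squarefree q) :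
    ∃ E : ZMod q ≃+* ∀ p : q.primeFactors, ZMod p,
      ∀ x (p : q.primeFactors), (E x p).val = x.val % p := by
  have hprod : ∏ p : q.primeFactors, (p : ℕ) = q := by
    rw [prod_coe_sort q.primeFactors (fun p => p), Nat.prod_primeFactors_of_squarefree hq]
  have hcop : Pairwise (Function.onFun Nat.Coprime fun p : q.primeFactors => (p : ℕ)) :=
    fun a b hab => (Nat.coprime_primes (Nat.prime_of_mem_primeFactors a.2)
      (Nat.prime_of_mem_primeFactors b.2)).mpr (Subtype.coe_ne_coe.mpr hab)
  let E := (ZMod.ringEquivCongr hprod.symm).trans (ZMod.prodEquivPi _ hcop)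
  refine ⟨E, fun x p => ?_⟩
  have : NeZero q := ⟨hq.ne_zero⟩
  have hdvd : (p : ℕ) ∣ q := Nat.dvd_of_mem_primeFactors p.2
  have hunique : (Pi.evalRingHom (fun p : q.primeFactors => ZMod p) p).comp (E : ZMod q →+* _) =
      ZMod.castHom hdvd (ZMod p) :=
    Subsingleton.elim _ _
  rw [← ZMod.val_castHom hdvd, ← hunique]
  rfl

theorem card_image_val_mod_lt_of_isUnit {q : ℕ} [NeZero q] {A : Finset (ZMod q)}
    (hA : ∀ a ∈ A, IsUnit a) {p : ℕ} (hp : p ∈ q.primeFactors) :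
    #(A.image (·.val % p)) < p := by
  have hpp := Nat.prime_of_mem_primeFactors hp
  have : Fact p.Prime := ⟨hpp⟩
  have hsub : A.image (·.val % p) ⊆ (range p).erase 0 := by
    intro t ht
    obtain ⟨a, ha, rfl⟩ := mem_image.mp ht
    refine mem_erase.mpr ⟨fun h0 => ?_, mem_range.mpr (Nat.mod_lt _ hpp.pos)⟩
    have hdvd := Nat.dvd_of_mem_primeFactors hp
    have hzero : ZMod.castHom hdvd (ZMod p) a = 0 := by
      rw [← ZMod.val_eq_zero, ZMod.val_castHom, h0]
    exact not_isUnit_zero (hzero ▸ (hA a ha).map (ZMod.castHom hdvd (ZMod p)))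
  calc #(A.image (·.val % p)) ≤ p - 1 := by
        simpa [card_erase_of_mem, hpp.pos] using card_le_card hsub
    _ < p := Nat.sub_lt hpp.pos one_pos

theorem finSumset_eq_sum (q s : ℕ) (A : Fin s → Finset (ZMod q)) :
    finSumset q s A = ∑ i, A i := by
  ext x
  simp [finSumset, mem_fintype_sum]

section PrimeCoordinates

variable {q : ℕ} (E : ZMod q ≃+* ∀ p : q.primeFactors, ZMod p)
  (hE : ∀ x (p : q.primeFactors), (E x p).val = x.val % p)
include hE

theorem isDownset_image_symm {B : Finset (∀ p : q.primeFactors, ZMod p)}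
    (hB : ∀ p, PiZMod.IsCompressedAt p B) : IsDownset q (B.image E.symm) := by
  intro v hv b hb
  obtain ⟨w, hw, rfl⟩ := mem_image.mp hv
  refine mem_image.mpr ⟨E b, PiZMod.mem_of_forall_isCompressedAt hB hw fun p => ?_,
    E.symm_apply_apply b⟩
  have hw_val := hE (E.symm w) p
  rw [E.apply_symm_apply] at hw_val
  rw [hE, hw_val]
  exact hb p p.2

theorem val_mod_lt_card_image_of_mem_image_symm {B : Finset (∀ p : q.primeFactors, ZMod p)}
    [∀ p : q.primeFactors, NeZero (p : ℕ)] {p : ℕ} (hp : p ∈ q.primeFactors)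
    (hB : PiZMod.IsCompressedAt ⟨p, hp⟩ B) {a : ZMod q} (ha : a ∈ B.image E.symm) :
    a.val % p < #(B.image (· ⟨p, hp⟩)) := by
  obtain ⟨b, hb, rfl⟩ := mem_image.mp ha
  have hb_val := hE (E.symm b) ⟨p, hp⟩
  rw [E.apply_symm_apply] at hb_val
  exact hb_val ▸ hB.val_lt_card_image hb

theorem card_image_eval_image [∀ p : q.primeFactors, NeZero (p : ℕ)] (A : Finset (ZMod q))
    {p : ℕ} (hp : p ∈ q.primeFactors) :
    #((A.image E).image (· ⟨p, hp⟩)) = #(A.image (·.val % p)) := by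
  rw [← card_image_of_injective _ (ZMod.val_injective _), image_image, image_image]
  exact congrArg card (image_congr fun a _ => hE a ⟨p, hp⟩)

end PrimeCoordinates

theorem stmt8 (q : ℕ) (hq : Squarefree q) (s : ℕ) (A : Fin s → Finset (ZMod q))
    (hA : ∀ i, ∀ a ∈ A i, IsUnit a)
    (u : Fin s → ZMod q)
    (hu : ∀ i, ∀ p ∈ q.primeFactors,
      (u i).val % p = ((A i).image (fun a => a.val % p)).card % p) :
    ∃ A' : Fin s → Finset (ZMod q),
      (∀ i, (A' i).card = (A i).card) ∧
      (∀ i, IsDownset q (A' i)) ∧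
      (∀ i, ∀ a ∈ A' i, ∀ p ∈ q.primeFactors, a.val % p < (u i).val % p) ∧
      (finSumset q s A').card ≤ (finSumset q s A).card := by
  have hprime : ∀ p : q.primeFactors, (p : ℕ).Prime :=
    fun p => Nat.prime_of_mem_primeFactors p.2
  have : NeZero q := ⟨hq.ne_zero⟩
  have : ∀ p : q.primeFactors, NeZero (p : ℕ) := fun p => ⟨(hprime p).ne_zero⟩
  obtain ⟨E, hE⟩ := ZMod.exists_ringEquiv_pi_primeFactors hq
  obtain ⟨B, hcard, hcomp, himage, hsum⟩ :=
    PiZMod.exists_compressed_family hprime univ fun i => (A i).image E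
  refine ⟨fun i => (B i).image E.symm, fun i => ?_, fun i => ?_, fun i a ha p hp => ?_, ?_⟩
  · rw [card_image_of_injective _ E.symm.injective, hcard, card_image_of_injective _ E.injective]
  · exact isDownset_image_symm E hE fun p => hcomp i p (mem_univ p)
  · rw [hu i p hp, Nat.mod_eq_of_lt (card_image_val_mod_lt_of_isUnit (hA i) hp),
      ← card_image_eval_image E hE (A i) hp]
    exact (val_mod_lt_card_image_of_mem_image_symm E hE hp (hcomp i _ (mem_univ _)) ha).trans_le
      (himage i _)
  · rw [finSumset_eq_sum, finSumset_eq_sum, ← image_sum,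
      card_image_of_injective _ E.symm.injective]
    refine hsum.trans_eq ?_
    rw [← image_sum, card_image_of_injective _ E.injective]
end

section
/- Let W be a finite product ∏_{p ≤ w} p^k of prime powers (k ≥ 2), let Z(W) = {a ∈ ℤ/Wℤ : a is a k-th power residue, gcd(a,W)=1}, and suppose (W, s') is a Waring pair for all s' ≥ s₀ where s₀ := 8kω(k)+2k+2. Let f : Z(W) → [0,1) satisfy 𝔼_{b ∈ Z(W)} f(b) > 1/2, and let s ≥ 2s₀. Then for every n ∈ ℤ/Wℤ with n ≡ s (mod gcd(R_k, W)), there exist b₁,…,b_s ∈ Z(W) with n = b₁+⋯+b_s in ℤ/Wℤ, f(bᵢ) > 0 for all i, and f(b₁)+⋯+f(b_s) > s/2. -/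
open Finset

/-!
Let `μ` be the largest value of `f` on `Z(W)`, attained at `b₀`. Since the mean of `f` exceeds
`1/2`, so does `μ`, and more than half of `Z(W)` lies in `A = {b : f b > 1 - μ}`. Every element
of `Z(W)` is `≡ 1 (mod gcd(R_k, W))`, so `n - (s - s₀) • b₀` has the residue of `s₀` and is
therefore a sum of `s₀` elements of `A`. Together with `s - s₀ ≥ s₀` copies of `b₀` this gives
`f`-sum `> (s - s₀) μ + s₀ (1 - μ) ≥ s / 2`.
-/

section Averaging

variable {α : Type*} {S : Finset α} {g : α → ℝ} {μ : ℝ}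

lemma cast_card_pos_of_half_lt_average (havg : 1 / 2 < (∑ b ∈ S, g b) / #S) :
    (0 : ℝ) < #S := by
  refine lt_of_le_of_ne (Nat.cast_nonneg _) fun h => ?_
  rw [← h, div_zero] at havg
  norm_num at havg

lemma half_lt_of_forall_le_of_half_lt_average (hμ : ∀ b ∈ S, g b ≤ μ)
    (havg : 1 / 2 < (∑ b ∈ S, g b) / #S) : 1 / 2 < μ := by
  have hS := cast_card_pos_of_half_lt_average havg
  have hsum : ∑ b ∈ S, g b ≤ #S * μ := by
    simpa using sum_le_card_nsmul S g μ hμ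
  rw [lt_div_iff₀ hS] at havg
  nlinarith

lemma half_card_lt_card_filter_one_sub_lt (hμ : ∀ b ∈ S, g b ≤ μ)
    (havg : 1 / 2 < (∑ b ∈ S, g b) / #S) :
    (#S : ℝ) / 2 < #(S.filter fun b => 1 - μ < g b) := by
  have hμ_half := half_lt_of_forall_le_of_half_lt_average hμ havg
  set A := S.filter fun b => 1 - μ < g b
  set B := S.filter fun b => ¬ 1 - μ < g b
  have hS := cast_card_pos_of_half_lt_average havg
  have hcard : (#A : ℝ) + #B = #S := by exact_mod_cast card_filter_add_card_filter_not _
  have hA : ∑ b ∈ A, g b ≤ #A * μ := by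
    simpa using sum_le_card_nsmul A g μ fun b hb => hμ b (mem_filter.mp hb).1
  have hB : ∑ b ∈ B, g b ≤ #B * (1 - μ) := by
    simpa using sum_le_card_nsmul B g (1 - μ) fun b hb => le_of_not_gt (mem_filter.mp hb).2
  rw [← sum_filter_add_sum_filter_not S (fun b => 1 - μ < g b), lt_div_iff₀ hS] at havg
  by_contra! hsmall
  -- the sum is at most `#S (1 - μ) + #A (2μ - 1) ≤ #S / 2`
  nlinarith

end Averaging

lemma add_div_two_lt_nsmul_add_sum {t m : ℕ} (hmt : m ≤ t) (hm : 0 < m) {μ : ℝ}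
    (hμ : 1 / 2 ≤ μ) {x : Fin m → ℝ} (hx : ∀ j, 1 - μ < x j) :
    ((t + m : ℕ) : ℝ) / 2 < t • μ + ∑ j, x j := by
  have hx_sum : m * (1 - μ) < ∑ j, x j := by
    have : Nonempty (Fin m) := ⟨⟨0, hm⟩⟩
    simpa [mul_sub] using sum_lt_sum_of_nonempty univ_nonempty fun j _ => hx j
  have hmt' : (m : ℝ) ≤ t := by exact_mod_cast hmt
  rw [nsmul_eq_mul]
  push_cast
  nlinarith [mul_nonneg (sub_nonneg.mpr hmt') (sub_nonneg.mpr hμ)]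

lemma sum_comp_append_const {α M : Type*} [AddCommMonoid M] {t m : ℕ} (g : α → M) (b : α)
    (c : Fin m → α) :
    ∑ i, g (Fin.append (fun _ : Fin t => b) c i) = t • g b + ∑ j, g (c j) := by
  simp [Fin.sum_univ_add]

lemma nsmul_mem_sumset {q s : ℕ} {A : Set (ZMod q)} {b : ZMod q} (hb : b ∈ A) :
    s • b ∈ sumset q s A :=
  ⟨fun _ => b, fun _ => hb, by simp⟩

lemma one_mem_Zset (k q : ℕ) : (1 : ZMod q) ∈ Zset k q :=
  ⟨⟨1, one_pow k⟩, isUnit_one⟩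

section Waring

variable {k q s : ℕ} [NeZero q]

local notation "φ" => ZMod.castHom (Nat.gcd_dvd_right (Rk k) q) (ZMod (Nat.gcd (Rk k) q))

lemma half_ncard_Zset_lt : ((Zset k q).ncard : ℝ) / 2 < (Zset k q).ncard := by
  have : 0 < (Zset k q).ncard := Set.ncard_pos (Set.toFinite _) |>.mpr ⟨1, one_mem_Zset k q⟩
  have : (0 : ℝ) < (Zset k q).ncard := by exact_mod_cast this
  linarith

/-- Both `s • b` and `(s + 1) • b` lie in sumsets of `Z(q)`, so `φ b = φ ((s+1) • b - s • b)` is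
`(s + 1) - s`. -/
lemma castHom_eq_one_of_mem_Zset_s13 (h₀ : WaringPair k q s) (h₁ : WaringPair k q (s + 1))
    {b : ZMod q} (hb : b ∈ Zset k q) : φ b = 1 := by
  have m₀ := nsmul_mem_sumset (s := s) hb
  have m₁ := nsmul_mem_sumset (s := s + 1) hb
  rw [h₀ _ subset_rfl half_ncard_Zset_lt] at m₀
  rw [h₁ _ subset_rfl half_ncard_Zset_lt] at m₁
  rw [Set.mem_ofPred_eq, map_nsmul, nsmul_eq_mul] at m₀ m₁
  push_cast at m₁
  linear_combination m₁ - m₀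

lemma sub_nsmul_mem_sumset (h₀ : WaringPair k q s) (h₁ : WaringPair k q (s + 1))
    {A : Set (ZMod q)} (hAZ : A ⊆ Zset k q) (hA : ((Zset k q).ncard : ℝ) / 2 < A.ncard)
    {b : ZMod q} (hb : b ∈ Zset k q) {t : ℕ} {n : ZMod q} (hn : φ n = ((t + s : ℕ) : ZMod _)) :
    n - t • b ∈ sumset q s A := by
  rw [h₀ A hAZ hA, Set.mem_ofPred_eq, map_sub, map_nsmul, castHom_eq_one_of_mem_Zset_s13 h₀ h₁ hb, hn]
  push_cast
  ring

end Waring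

theorem stmt13_general (k : ℕ) (W : ℕ) [NeZero W]
    (hWaring : ∀ s' : ℕ, 8 * k * k.primeFactors.card + 2 * k + 2 ≤ s' → WaringPair k W s')
    (f : ZMod W → ℝ) (hf1 : ∀ b ∈ Zset k W, f b < 1)
    (hmean : 1 / 2 < (∑ b ∈ (Set.toFinite (Zset k W)).toFinset, f b) / ((Zset k W).ncard : ℝ))
    (s : ℕ) (hs : 2 * (8 * k * k.primeFactors.card + 2 * k + 2) ≤ s)
    (n : ZMod W)
    (hn : ZMod.castHom (Nat.gcd_dvd_right (Rk k) W) (ZMod (Nat.gcd (Rk k) W)) n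
        = (s : ZMod (Nat.gcd (Rk k) W))) :
    ∃ b : Fin s → ZMod W,
      (∀ i, b i ∈ Zset k W) ∧ (∑ i, b i = n) ∧
      (∀ i, 0 < f (b i)) ∧ (s : ℝ) / 2 < ∑ i, f (b i) := by
  set s₀ := 8 * k * k.primeFactors.card + 2 * k + 2
  obtain ⟨t, rfl⟩ : ∃ t, s = t + s₀ := ⟨s - s₀, by omega⟩
  set Z := (Set.toFinite (Zset k W)).toFinset
  rw [Set.ncard_eq_toFinset_card _ (Set.toFinite _)] at hmean
  obtain ⟨b₀, hb₀, hmax⟩ := Z.exists_max_image f ⟨1, by simpa [Z] using one_mem_Zset k W⟩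
  have hb₀Z : b₀ ∈ Zset k W := by simpa [Z] using hb₀
  have hμ := half_lt_of_forall_le_of_half_lt_average hmax hmean
  set A := Z.filter fun b => 1 - f b₀ < f b
  have hAZ : (A : Set (ZMod W)) ⊆ Zset k W := fun b hb => by simpa [Z] using (mem_filter.mp hb).1
  have hA : ((Zset k W).ncard : ℝ) / 2 < (A : Set (ZMod W)).ncard := by
    rw [Set.ncard_coe_finset, Set.ncard_eq_toFinset_card _ (Set.toFinite _)]
    exact half_card_lt_card_filter_one_sub_lt hmax hmean
  obtain ⟨c, hcA, hc⟩ := sub_nsmul_mem_sumset (hWaring s₀ le_rfl) (hWaring (s₀ + 1) (by omega))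
    hAZ hA hb₀Z hn
  have hfc : ∀ j, 1 - f b₀ < f (c j) := fun j => (mem_filter.mp (hcA j)).2
  refine ⟨Fin.append (fun _ : Fin t => b₀) c, ?_, ?_, ?_, ?_⟩
  · exact Fin.addCases (fun _ => by simpa only [Fin.append_left] using hb₀Z)
      (fun j => by simpa only [Fin.append_right] using hAZ (hcA j))
  · rw [sum_comp_append_const (fun x => x), hc, add_sub_cancel]
  · have : 0 < 1 - f b₀ := by linarith [hf1 b₀ hb₀Z]
    exact Fin.addCases (fun _ => by rw [Fin.append_left]; linarith)
      (fun j => by simpa only [Fin.append_right] using this.trans (hfc j))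
  · rw [sum_comp_append_const]
    exact add_div_two_lt_nsmul_add_sum (by omega) (by omega) hμ.le hfc

theorem stmt13 (k : ℕ) (hk : 2 ≤ k) (w : ℕ) (W : ℕ) [NeZero W]
    (hW : W = ∏ p ∈ (Finset.range (w + 1)).filter Nat.Prime, p ^ k)
    (hWaring : ∀ s' : ℕ, 8 * k * k.primeFactors.card + 2 * k + 2 ≤ s' → WaringPair k W s')
    (f : ZMod W → ℝ) (hf0 : ∀ b ∈ Zset k W, 0 ≤ f b) (hf1 : ∀ b ∈ Zset k W, f b < 1)
    (hmean : 1 / 2 < (∑ b ∈ (Set.toFinite (Zset k W)).toFinset, f b) / ((Zset k W).ncard : ℝ))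
    (s : ℕ) (hs : 2 * (8 * k * k.primeFactors.card + 2 * k + 2) ≤ s)
    (n : ZMod W)
    (hn : ZMod.castHom (Nat.gcd_dvd_right (Rk k) W) (ZMod (Nat.gcd (Rk k) W)) n
        = (s : ZMod (Nat.gcd (Rk k) W))) :
    ∃ b : Fin s → ZMod W,
      (∀ i, b i ∈ Zset k W) ∧ (∑ i, b i = n) ∧
      (∀ i, 0 < f (b i)) ∧ (s : ℝ) / 2 < ∑ i, f (b i) :=
  stmt13_general k W hWaring f hf1 hmean s hs n hn
end

section
/- Let G be a finite abelian group, let A ⊆ G be a nonempty set not contained in any coset of a proper subgroup of G, and let s ≥ ⌈2|G|/|A|⌉ − 1. Then the s-fold sumset sA equals G. -/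
open Finset Pointwise

namespace Stmt17Aux

variable {G : Type*} [AddCommGroup G] [Fintype G] [DecidableEq G]

/-- Admissible ("good") sets for the isoperimetric problem w.r.t. `A`. -/
def good (A X : Finset G) : Prop := X.Nonempty ∧ X + A ≠ Finset.univ

/-- The connectivity: minimal boundary size `|X+A| - |X|` over good sets. -/
noncomputable def kap (A : Finset G) : ℕ :=
  sInf {c | ∃ X : Finset G, good A X ∧ (X + A).card = X.card + c}

/-- Fragments: minimizers of the boundary. -/
def frag (A X : Finset G) : Prop := good A X ∧ (X + A).card = X.card + kap A

/-- Atom size: minimal cardinality of a fragment. -/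
noncomputable def alp (A : Finset G) : ℕ :=
  sInf {m | ∃ X : Finset G, frag A X ∧ X.card = m}

section basic

variable {A : Finset G}

lemma subset_add_self (h0 : (0 : G) ∈ A) (X : Finset G) : X ⊆ X + A :=
  Finset.subset_add_left X h0

lemma exists_frag (h0 : (0 : G) ∈ A) (hex : ∃ X, good A X) : ∃ X, frag A X := by
  obtain ⟨X, hX⟩ := hex
  have h1 : X.card ≤ (X + A).card := card_le_card (subset_add_self h0 X)
  have hne : Set.Nonempty {c : ℕ | ∃ X : Finset G, good A X ∧ (X + A).card = X.card + c} := by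
    refine ⟨(X + A).card - X.card, ?_⟩
    simp only [Set.mem_setOf_eq]
    exact ⟨X, hX, by omega⟩
  exact Nat.sInf_mem hne

lemma good_card_le (h0 : (0 : G) ∈ A) {X : Finset G} (hX : good A X) :
    X.card + kap A ≤ (X + A).card := by
  have h1 : X.card ≤ (X + A).card := card_le_card (subset_add_self h0 X)
  have h2 : kap A ≤ (X + A).card - X.card := by
    apply Nat.sInf_le
    simp only [Set.mem_setOf_eq]
    exact ⟨X, hX, by omega⟩
  omega

lemma exists_atom (h0 : (0 : G) ∈ A) (hex : ∃ X, good A X) :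
    ∃ X, frag A X ∧ X.card = alp A := by
  obtain ⟨X, hX⟩ := exists_frag h0 hex
  have hne : Set.Nonempty {m : ℕ | ∃ X : Finset G, frag A X ∧ X.card = m} := by
    refine ⟨X.card, ?_⟩
    simp only [Set.mem_setOf_eq]
    exact ⟨X, hX, rfl⟩
  exact Nat.sInf_mem hne

lemma alp_le {X : Finset G} (hX : frag A X) : alp A ≤ X.card := by
  apply Nat.sInf_le
  simp only [Set.mem_setOf_eq]
  exact ⟨X, hX, rfl⟩

lemma translate_card (X : Finset G) (g : G) : (X + ({g} : Finset G)).card = X.card := by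
  have h : X + ({g} : Finset G) = X.image (· + g) := by
    ext x
    simp only [Finset.mem_add, Finset.mem_singleton, Finset.mem_image]
    constructor
    · rintro ⟨y, hy, z, rfl, rfl⟩; exact ⟨y, hy, rfl⟩
    · rintro ⟨y, hy, rfl⟩; exact ⟨y, hy, g, rfl, rfl⟩
  rw [h, Finset.card_image_of_injective _ (add_left_injective g)]

lemma translate_shift (A X : Finset G) (g : G) :
    (X + ({g} : Finset G)) + A = (X + A) + ({g} : Finset G) := add_right_comm X {g} A

lemma ne_univ_translate {X : Finset G} (h : X ≠ Finset.univ) (g : G) :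
    X + ({g} : Finset G) ≠ Finset.univ := by
  intro hc
  apply h
  apply Finset.eq_univ_of_card
  have h1 := translate_card X g
  rw [hc, Finset.card_univ] at h1
  omega

lemma frag_translate (h0 : (0 : G) ∈ A) {X : Finset G} (hX : frag A X) (g : G) :
    frag A (X + ({g} : Finset G)) := by
  obtain ⟨⟨hne, hnu⟩, hcard⟩ := hX
  refine ⟨⟨hne.add (Finset.singleton_nonempty g), ?_⟩, ?_⟩
  · rw [translate_shift]
    exact ne_univ_translate hnu g
  · rw [translate_shift, translate_card, translate_card, hcard]

lemma compl_nonempty' {X : Finset G} (h : X ≠ Finset.univ) : Xᶜ.Nonempty := by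
  rw [Finset.nonempty_iff_ne_empty]
  intro hc
  apply h
  have := congrArg compl hc
  rwa [compl_compl, Finset.compl_empty] at this

lemma good_neg_compl (h0 : (0 : G) ∈ A) {X : Finset G} (hX : good A X) :
    good (-A) ((X + A)ᶜ) ∧ (X + A)ᶜ + -A ⊆ Xᶜ := by
  have hsub : (X + A)ᶜ + -A ⊆ Xᶜ := by
    intro z hz
    rcases Finset.mem_add.1 hz with ⟨y, hy, w, hw, hyw⟩
    rcases Finset.mem_neg.1 hw with ⟨a, ha, rfl⟩
    rw [Finset.mem_compl] at hy ⊢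
    intro hzX
    apply hy
    have hy' : y = z + a := by rw [← hyw]; abel
    rw [hy']
    exact Finset.mem_add.2 ⟨z, hzX, a, ha, rfl⟩
  refine ⟨⟨compl_nonempty' hX.2, ?_⟩, hsub⟩
  intro hc
  have h1 : Finset.univ ⊆ Xᶜ := hc ▸ hsub
  rcases hX.1 with ⟨x, hx⟩
  have := h1 (Finset.mem_univ x)
  rw [Finset.mem_compl] at this
  exact this hx

lemma zero_mem_neg (h0 : (0 : G) ∈ A) : (0 : G) ∈ -A :=
  Finset.mem_neg.2 ⟨0, h0, neg_zero⟩

lemma exists_good_neg (h0 : (0 : G) ∈ A) (hex : ∃ X, good A X) : ∃ X, good (-A) X := by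
  obtain ⟨X, hX⟩ := hex
  exact ⟨(X + A)ᶜ, (good_neg_compl h0 hX).1⟩

lemma kap_neg_le (h0 : (0 : G) ∈ A) (hex : ∃ X, good A X) : kap (-A) ≤ kap A := by
  obtain ⟨X, hX⟩ := exists_frag h0 hex
  obtain ⟨hgood, hsub⟩ := good_neg_compl h0 hX.1
  have h1 : ((X + A)ᶜ + -A).card ≤ Xᶜ.card := card_le_card hsub
  have h2 : ((X + A)ᶜ).card + kap (-A) ≤ ((X + A)ᶜ + -A).card :=
    good_card_le (zero_mem_neg h0) hgood
  have h3 : X.card + Xᶜ.card = Fintype.card G := Finset.card_add_card_compl X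
  have h4 : (X + A).card + ((X + A)ᶜ).card = Fintype.card G := Finset.card_add_card_compl _
  have h5 : (X + A).card = X.card + kap A := hX.2
  omega

lemma kap_neg (h0 : (0 : G) ∈ A) (hex : ∃ X, good A X) : kap (-A) = kap A := by
  refine le_antisymm (kap_neg_le h0 hex) ?_
  have := kap_neg_le (A := -A) (zero_mem_neg h0) (exists_good_neg h0 hex)
  rwa [neg_neg] at this

lemma submod (A X Y : Finset G) :
    ((X ∪ Y) + A).card + ((X ∩ Y) + A).card ≤ (X + A).card + (Y + A).card := by
  have h1 : (X ∪ Y) + A = (X + A) ∪ (Y + A) := Finset.union_add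
  have h2 : (X ∩ Y) + A ⊆ (X + A) ∩ (Y + A) :=
    Finset.subset_inter (Finset.add_subset_add_right Finset.inter_subset_left)
      (Finset.add_subset_add_right Finset.inter_subset_right)
  have h3 := Finset.card_union_add_card_inter (X + A) (Y + A)
  have h4 := card_le_card h2
  rw [h1]
  omega

end basic

section atoms

variable {A : Finset G}

/-- Distinct atoms are disjoint (given `alp A ≤ alp (-A)`); contrapositive form. -/
lemma atom_eq (h0 : (0 : G) ∈ A) (hex : ∃ X, good A X) (hle : alp A ≤ alp (-A))
    {X Y : Finset G} (hX : frag A X) (hXc : X.card = alp A)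
    (hY : frag A Y) (hYc : Y.card = alp A) (hnd : ¬ Disjoint X Y) : X = Y := by
  by_contra hne
  have hZne : (X ∩ Y).Nonempty := Finset.not_disjoint_iff_nonempty_inter.1 hnd
  have hZgood : good A (X ∩ Y) := by
    refine ⟨hZne, ?_⟩
    intro hc
    apply hX.1.2
    apply Finset.univ_subset_iff.1
    rw [← hc]
    exact Finset.add_subset_add_right Finset.inter_subset_left
  have hZlt : (X ∩ Y).card < alp A := by
    have hss : X ∩ Y ⊂ X := by
      refine Finset.ssubset_iff_subset_ne.2 ⟨Finset.inter_subset_left, ?_⟩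
      intro h
      apply hne
      have hXY : X ⊆ Y := Finset.inter_eq_left.1 h
      exact Finset.eq_of_subset_of_card_le hXY (by omega)
    have := Finset.card_lt_card hss
    omega
  have hZk : (X ∩ Y).card + kap A ≤ ((X ∩ Y) + A).card := good_card_le h0 hZgood
  have hsubm := submod A X Y
  have hXY : (X ∪ Y).card + (X ∩ Y).card = X.card + Y.card :=
    Finset.card_union_add_card_inter X Y
  have hXA : (X + A).card = X.card + kap A := hX.2
  have hYA : (Y + A).card = Y.card + kap A := hY.2
  by_cases hU : (X ∪ Y) + A = Finset.univ
  · -- hard case: the union has full sumset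
    have hn : ((X ∪ Y) + A).card = Fintype.card G := by rw [hU, Finset.card_univ]
    obtain ⟨hgoodY, hsubY⟩ := good_neg_compl h0 hX.1
    have h1 : ((X + A)ᶜ + -A).card ≤ Xᶜ.card := card_le_card hsubY
    have h2 : ((X + A)ᶜ).card + kap (-A) ≤ ((X + A)ᶜ + -A).card :=
      good_card_le (zero_mem_neg h0) hgoodY
    have h3 : X.card + Xᶜ.card = Fintype.card G := Finset.card_add_card_compl X
    have h4 : (X + A).card + ((X + A)ᶜ).card = Fintype.card G := Finset.card_add_card_compl _
    have hkk : kap (-A) = kap A := kap_neg h0 hex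
    have hYfrag : frag (-A) ((X + A)ᶜ) := ⟨hgoodY, by omega⟩
    have h5 : alp (-A) ≤ ((X + A)ᶜ).card := alp_le hYfrag
    have hZ1 : 1 ≤ (X ∩ Y).card := hZne.card_pos
    omega
  · -- easy case: intersection is a smaller fragment
    have hUgood : good A (X ∪ Y) :=
      ⟨hX.1.1.mono Finset.subset_union_left, hU⟩
    have hUk : (X ∪ Y).card + kap A ≤ ((X ∪ Y) + A).card := good_card_le h0 hUgood
    have hZfrag : frag A (X ∩ Y) := ⟨hZgood, by omega⟩
    have := alp_le hZfrag
    omega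

/-- Key step: with the atom through 0 being a subgroup, coset-freeness forces `|A| ≤ 2κ`. -/
lemma kap_half_aux (h0 : (0 : G) ∈ A) (hex : ∃ X, good A X)
    (hfree : ∀ H : AddSubgroup G, H ≠ ⊤ → ¬ ∀ a ∈ A, a ∈ H)
    (hle : alp A ≤ alp (-A)) : A.card ≤ 2 * kap A := by
  obtain ⟨X₁, hX₁, hc₁⟩ := exists_atom h0 hex
  obtain ⟨x₁, hx₁⟩ := hX₁.1.1
  set F : Finset G := X₁ + ({-x₁} : Finset G) with hFdef
  have hF : frag A F := frag_translate h0 hX₁ (-x₁)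
  have hFc : F.card = alp A := by rw [hFdef, translate_card, hc₁]
  have h0F : (0 : G) ∈ F :=
    Finset.mem_add.2 ⟨x₁, hx₁, -x₁, Finset.mem_singleton_self _, add_neg_cancel x₁⟩
  have hstep : ∀ g ∈ F, F + ({g} : Finset G) = F := by
    intro g hg
    have hfr : frag A (F + ({g} : Finset G)) := frag_translate h0 hF g
    have hfc : (F + ({g} : Finset G)).card = alp A := by rw [translate_card, hFc]
    have hgmem : g ∈ F + ({g} : Finset G) :=
      Finset.mem_add.2 ⟨0, h0F, g, Finset.mem_singleton_self _, zero_add g⟩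
    refine atom_eq h0 hex hle hfr hfc hF hFc ?_
    intro hd
    exact (Finset.disjoint_left.1 hd hgmem) hg
  have hclosed : ∀ x ∈ F, ∀ g ∈ F, x + g ∈ F := by
    intro x hx g hg
    rw [← hstep g hg]
    exact Finset.mem_add.2 ⟨x, hx, g, Finset.mem_singleton_self _, rfl⟩
  have hnsmul : ∀ (n : ℕ) (x : G), x ∈ F → (n + 1) • x ∈ F := by
    intro n
    induction n with
    | zero => intro x hx; simpa using hx
    | succ n ih =>
      intro x hx
      rw [succ_nsmul]
      exact hclosed _ (ih x hx) _ hx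
  have hneg : ∀ x ∈ F, -x ∈ F := by
    intro x hx
    have hk : 0 < addOrderOf x := addOrderOf_pos x
    obtain ⟨m, hm⟩ : ∃ m, addOrderOf x = m + 1 := ⟨addOrderOf x - 1, by omega⟩
    have h0' : (m + 1) • x = 0 := by rw [← hm]; exact addOrderOf_nsmul_eq_zero x
    cases m with
    | zero =>
      have hx0 : x = 0 := by simpa using h0'
      rw [hx0, neg_zero]
      rwa [hx0] at hx
    | succ m =>
      have h1 : (m + 1) • x + x = 0 := by rw [← succ_nsmul]; exact h0'
      have h2 : (m + 1) • x = -x := eq_neg_of_add_eq_zero_left h1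
      rw [← h2]
      exact hnsmul m x hx
  let H : AddSubgroup G :=
    { carrier := ↑F
      zero_mem' := h0F
      add_mem' := fun {a b} ha hb => hclosed a ha b hb
      neg_mem' := fun {a} ha => hneg a ha }
  have hmemH : ∀ x : G, x ∈ H ↔ x ∈ F := fun x => Iff.rfl
  have hFne : F ≠ Finset.univ := by
    intro hc
    apply hF.1.2
    apply Finset.univ_subset_iff.1
    rw [← hc]
    exact subset_add_self h0 F
  have hHne : H ≠ ⊤ := by
    intro hc
    apply hFne
    apply Finset.eq_univ_of_forall
    intro x
    have : x ∈ H := by rw [hc]; exact AddSubgroup.mem_top x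
    exact (hmemH x).1 this
  obtain ⟨a, ha, haF⟩ : ∃ a ∈ A, a ∉ F := by
    have := hfree H hHne
    push_neg at this
    obtain ⟨a, ha, h⟩ := this
    exact ⟨a, ha, fun hc => h ((hmemH a).2 hc)⟩
  have hdisj : Disjoint F (F + ({a} : Finset G)) := by
    rw [Finset.disjoint_left]
    intro x hxF hxFa
    rcases Finset.mem_add.1 hxFa with ⟨y, hy, z, hz, hyz⟩
    rw [Finset.mem_singleton] at hz
    apply haF
    have hax : a = -y + x := by rw [← hyz, hz]; abel
    rw [hax]
    exact hclosed _ (hneg y hy) _ hxF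
  have hsub2 : F ∪ (F + ({a} : Finset G)) ⊆ F + A :=
    Finset.union_subset (subset_add_self h0 F)
      (Finset.add_subset_add_left (Finset.singleton_subset_iff.2 ha))
  have hcard2 : F.card + F.card ≤ (F + A).card := by
    have h := card_le_card hsub2
    rwa [Finset.card_union_of_disjoint hdisj, translate_card F a] at h
  have hAsub : A ⊆ F + A := by
    intro a' ha'
    exact Finset.mem_add.2 ⟨0, h0F, a', ha', zero_add a'⟩
  have hA1 : A.card ≤ (F + A).card := card_le_card hAsub
  have hfr2 : (F + A).card = F.card + kap A := hF.2
  omega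

lemma kap_half (h0 : (0 : G) ∈ A) (hex : ∃ X, good A X)
    (hfree : ∀ H : AddSubgroup G, H ≠ ⊤ → ¬ ∀ a ∈ A, a ∈ H) : A.card ≤ 2 * kap A := by
  rcases le_total (alp A) (alp (-A)) with hle | hle
  · exact kap_half_aux h0 hex hfree hle
  · have h0n : (0 : G) ∈ -A := zero_mem_neg h0
    have hexn : ∃ X, good (-A) X := exists_good_neg h0 hex
    have hfreen : ∀ H : AddSubgroup G, H ≠ ⊤ → ¬ ∀ a ∈ -A, a ∈ H := by
      intro H hH hall
      apply hfree H hH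
      intro a ha
      have : -a ∈ -A := Finset.mem_neg.2 ⟨a, ha, rfl⟩
      have := hall _ this
      simpa using H.neg_mem this
    have hlen : alp (-A) ≤ alp (- -A) := by rwa [neg_neg]
    have := kap_half_aux h0n hexn hfreen hlen
    rwa [Finset.card_neg, kap_neg h0 hex] at this

/-- The key growth inequality. -/
lemma key_growth (h0 : (0 : G) ∈ A)
    (hfree : ∀ H : AddSubgroup G, H ≠ ⊤ → ¬ ∀ a ∈ A, a ∈ H)
    {X : Finset G} (hgood : good A X) : 2 * X.card + A.card ≤ 2 * (X + A).card := by
  have hex : ∃ X, good A X := ⟨X, hgood⟩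
  have h1 := good_card_le h0 hgood
  have h2 := kap_half h0 hex hfree
  omega

end atoms

section iter

/-- `s`-fold iterated sumset. -/
def itS (A : Finset G) : ℕ → Finset G
  | 0 => {0}
  | n + 1 => itS A n + A

lemma zero_mem_itS {A : Finset G} (h0 : (0 : G) ∈ A) : ∀ k, (0 : G) ∈ itS A k := by
  intro k
  induction k with
  | zero => exact Finset.mem_singleton_self 0
  | succ k ih => exact Finset.mem_add.2 ⟨0, ih, 0, h0, add_zero 0⟩

lemma itS_mono {A : Finset G} (h0 : (0 : G) ∈ A) {k l : ℕ} (h : k ≤ l) :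
    itS A k ⊆ itS A l := by
  induction h with
  | refl => exact subset_rfl
  | step h ih => exact ih.trans (subset_add_self h0 _)

lemma mem_itS (A : Finset G) (k : ℕ) (x : G) :
    x ∈ itS A k ↔ ∃ f : Fin k → G, (∀ i, f i ∈ A) ∧ ∑ i, f i = x := by
  induction k generalizing x with
  | zero =>
    constructor
    · intro hx
      rw [itS, Finset.mem_singleton] at hx
      exact ⟨fun i => i.elim0, fun i => i.elim0, by simp [hx.symm]⟩
    · rintro ⟨f, hf, hsum⟩
      rw [itS, Finset.mem_singleton]
      simpa using hsum.symm
  | succ k ih =>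
    constructor
    · intro hx
      rcases Finset.mem_add.1 hx with ⟨y, hy, a, ha, hya⟩
      rcases (ih y).1 hy with ⟨f, hf, hsum⟩
      refine ⟨Fin.snoc f a, ?_, ?_⟩
      · intro i
        refine Fin.lastCases ?_ ?_ i
        · simpa using ha
        · intro j; simpa using hf j
      · rw [Fin.sum_univ_castSucc]
        simp only [Fin.snoc_castSucc, Fin.snoc_last]
        rw [hsum, hya]
    · rintro ⟨f, hf, rfl⟩
      rw [Fin.sum_univ_castSucc]
      refine Finset.mem_add.2 ⟨∑ i : Fin k, f i.castSucc, ?_, f (Fin.last k), hf _, rfl⟩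
      exact (ih _).2 ⟨fun i => f i.castSucc, fun i => hf _, rfl⟩

lemma itS_translate (A : Finset G) (c : G) :
    ∀ k, itS (A + ({c} : Finset G)) k = itS A k + ({k • c} : Finset G) := by
  intro k
  induction k with
  | zero =>
    show ({0} : Finset G) = ({0} : Finset G) + {(0 : ℕ) • c}
    rw [zero_nsmul, Finset.singleton_add_singleton, add_zero]
  | succ k ih =>
    show itS (A + ({c} : Finset G)) k + (A + {c}) = itS A k + A + {(k + 1) • c}
    rw [ih, add_add_add_comm, Finset.singleton_add_singleton, succ_nsmul]

end iter

end Stmt17Aux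

open Stmt17Aux in
theorem stmt17 {G : Type*} [AddCommGroup G] [Fintype G] (A : Set G) (hne : A.Nonempty)
    (hcoset : ∀ H : AddSubgroup G, H ≠ ⊤ → ∀ g : G, ¬ A ⊆ (g + ·) '' (H : Set G))
    (s : ℕ) (hs : ⌈(2 * (Fintype.card G : ℝ)) / (A.ncard : ℝ)⌉ - 1 ≤ (s : ℤ)) :
    {x : G | ∃ f : Fin s → G, (∀ i, f i ∈ A) ∧ ∑ i, f i = x} = Set.univ := by
  classical
  have hfin : A.Finite := A.toFinite
  set A' : Finset G := hfin.toFinset with hA'def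
  have hmemA' : ∀ x, x ∈ A' ↔ x ∈ A := fun x => hfin.mem_toFinset
  have hA'ne : A'.Nonempty := by
    rcases hne with ⟨a, ha⟩; exact ⟨a, (hmemA' a).2 ha⟩
  have hcardA' : A'.card = A.ncard := (Set.ncard_eq_toFinset_card A hfin).symm
  have hpos : 0 < A'.card := Finset.card_pos.2 hA'ne
  have hn1 : 1 ≤ Fintype.card G := Fintype.card_pos
  -- translate the ceiling hypothesis into a clean ℕ inequality
  have hsnat : 2 * Fintype.card G ≤ (s + 1) * A'.card := by
    have hceil : (⌈(2 * (Fintype.card G : ℝ)) / (A.ncard : ℝ)⌉ : ℤ) ≤ (s : ℤ) + 1 := by linarith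
    have h1 : (2 * (Fintype.card G : ℝ)) / (A.ncard : ℝ) ≤ ((s : ℤ) + 1 : ℤ) := by
      exact_mod_cast Int.ceil_le.1 hceil
    have hA0 : (0 : ℝ) < (A.ncard : ℝ) := by
      have : 0 < A.ncard := by omega
      exact_mod_cast this
    rw [div_le_iff₀ hA0] at h1
    have h2 : (2 * (Fintype.card G : ℝ)) ≤ ((s : ℝ) + 1) * (A'.card : ℝ) := by
      rw [hcardA']; push_cast at h1 ⊢; linarith
    exact_mod_cast h2
  obtain ⟨a₀, ha₀⟩ := hA'ne
  set B : Finset G := A' + ({-a₀} : Finset G) with hBdef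
  have h0B : (0 : G) ∈ B :=
    Finset.mem_add.2 ⟨a₀, ha₀, -a₀, Finset.mem_singleton_self _, add_neg_cancel a₀⟩
  have hcardB : B.card = A'.card := translate_card A' (-a₀)
  have hfreeB : ∀ H : AddSubgroup G, H ≠ ⊤ → ¬ ∀ b ∈ B, b ∈ H := by
    intro H hH hall
    apply hcoset H hH a₀
    intro a ha
    have haA' : a ∈ A' := (hmemA' a).2 ha
    have hmemB : a + -a₀ ∈ B :=
      Finset.mem_add.2 ⟨a, haA', -a₀, Finset.mem_singleton_self _, rfl⟩
    have hmem : a + -a₀ ∈ H := hall _ hmemB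
    refine ⟨a + -a₀, hmem, ?_⟩
    show a₀ + (a + -a₀) = a
    abel
  have hmain : itS A' s = Finset.univ := by
    by_contra hU
    have hUB : itS B s ≠ Finset.univ := by
      rw [hBdef, itS_translate]
      intro hc
      apply hU
      apply Finset.eq_univ_of_card
      have h1 := translate_card (itS A' s) (s • (-a₀))
      rw [hc, Finset.card_univ] at h1
      omega
    have hA'le : A'.card ≤ Fintype.card G := Finset.card_le_univ A'
    have hs1 : 1 ≤ s := by
      rcases Nat.eq_zero_or_pos s with rfl | h
      · have h1 : (0 + 1) * A'.card = A'.card := by ring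
        omega
      · exact h
    have hgrow : ∀ k, 1 ≤ k → k ≤ s → (k + 1) * B.card ≤ 2 * (itS B k).card := by
      intro k
      induction k with
      | zero => omega
      | succ k ih =>
        intro _ hks
        rcases Nat.eq_zero_or_pos k with rfl | hkpos
        · have h1 : itS B 1 = B := by
            show ({0} : Finset G) + B = B
            ext x
            simp [Finset.mem_add]
          rw [h1]
        · have ih' := ih hkpos (le_trans (Nat.le_succ k) hks)
          have hgood : good B (itS B k) := by
            refine ⟨⟨0, zero_mem_itS h0B k⟩, ?_⟩
            intro hc
            apply hUB
            apply Finset.univ_subset_iff.1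
            rw [← hc]
            exact itS_mono h0B hks
          have hkey := key_growth h0B hfreeB hgood
          have hstep : itS B (k + 1) = itS B k + B := rfl
          calc (k + 1 + 1) * B.card = (k + 1) * B.card + B.card := by ring
            _ ≤ 2 * (itS B k).card + B.card := by omega
            _ ≤ 2 * (itS B k + B).card := by omega
            _ = 2 * (itS B (k + 1)).card := by rw [← hstep]
    have hfinal := hgrow s hs1 le_rfl
    have hsnat' : 2 * Fintype.card G ≤ (s + 1) * B.card := by rw [hcardB]; exact hsnat
    have hle2 : Fintype.card G ≤ (itS B s).card := by
      have h2 : 2 * Fintype.card G ≤ 2 * (itS B s).card := le_trans hsnat' hfinal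
      omega
    exact hUB (Finset.eq_univ_of_card _
      (le_antisymm (Finset.card_le_univ _) hle2))
  ext x
  simp only [Set.mem_setOf_eq, Set.mem_univ, iff_true]
  have hx : x ∈ itS A' s := hmain ▸ Finset.mem_univ x
  rcases (mem_itS A' s x).1 hx with ⟨f, hf, hsum⟩
  exact ⟨f, fun i => (hmemA' _).1 (hf i), hsum⟩
end
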